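/- arXiv:1512.00834 — 2 statements merged into one kernel-verified Lean document; each statement's English description precedes it below -/
import Mathlib

section
/- Let r ≥ 1, and suppose xt ≥ 4r where x, t, k_p, k_q are positive naturals, p, q ∈ (0, 1/2]. Then Pr[Bin(k_p t x, p) + Bin(k_q t x, q) = r] ≥ (φ x t)^r / ((4/3)^r r!) * (1-p)^{x t k_p} (1-q)^{x t k_q}, where φ = k_p p + k_q q. -/
/-!
Expand `(a + b)^r / r!` with `a = 3 N p / 4`, `b = 3 M q / 4` into `∑ a^i / i! * b^(r-i) / (r-i)!`
and compare term by term with the convolution of the two binomial probabilities: as long as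
`4 i ≤ N`, each of the falling factors `N, N - 1, …, N - i + 1` of `i! * C(N, i)` is at least
`3 N / 4`, and `(1 - p)^N ≤ (1 - p)^(N - i)`.
-/

open Finset

section

open Nat

theorem add_pow_div_factorial {K : Type*} [Field K] [CharZero K] (a b : K) (n : ℕ) :
    (a + b) ^ n / n ! = ∑ i ∈ range (n + 1), a ^ i / i ! * (b ^ (n - i) / (n - i)!) := by
  rw [add_pow, sum_div]
  refine sum_congr rfl fun i hi => ?_
  have hin : i ≤ n := Nat.le_of_lt_succ (mem_range.1 hi)
  have hchoose : (n.choose i : K) ≠ 0 := Nat.cast_ne_zero.2 (choose_pos hin).ne'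
  rw [← choose_mul_factorial_mul_factorial hin, Nat.cast_mul, Nat.cast_mul]
  field_simp

theorem pow_div_factorial_le_choose {N i : ℕ} (h : 4 * i ≤ N) :
    (3 * N / 4 : ℝ) ^ i / i ! ≤ N.choose i := by
  refine le_trans ?_ (pow_le_choose i N)
  gcongr
  rw [Nat.cast_sub (by omega)]
  push_cast
  have : (4 * i : ℝ) ≤ N := by exact_mod_cast h
  linarith

theorem pow_div_factorial_mul_le_binomial_term {N i : ℕ} {p : ℝ} (hp0 : 0 ≤ p) (hp1 : p ≤ 1)
    (h : 4 * i ≤ N) :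
    (3 * N * p / 4) ^ i / i ! * (1 - p) ^ N ≤ N.choose i * p ^ i * (1 - p) ^ (N - i) := by
  have hsplit : (3 * N * p / 4 : ℝ) ^ i / i ! = (3 * N / 4 : ℝ) ^ i / i ! * p ^ i := by
    rw [mul_div_right_comm, mul_pow]; ring
  rw [hsplit]
  have h1p : 0 ≤ 1 - p := by linarith
  exact mul_le_mul (mul_le_mul_of_nonneg_right (pow_div_factorial_le_choose h) (by positivity))
    (pow_le_pow_of_le_one h1p (by linarith) (Nat.sub_le N i)) (pow_nonneg h1p N) (by positivity)

theorem pow_div_factorial_mul_le_sum_binomial_terms {N M r : ℕ} {p q : ℝ}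
    (hp0 : 0 ≤ p) (hp1 : p ≤ 1) (hq0 : 0 ≤ q) (hq1 : q ≤ 1) (hN : 4 * r ≤ N) (hM : 4 * r ≤ M) :
    (3 * (N * p + M * q) / 4) ^ r / r ! * (1 - p) ^ N * (1 - q) ^ M ≤
      ∑ i ∈ range (r + 1), (N.choose i : ℝ) * p ^ i * (1 - p) ^ (N - i) *
        (M.choose (r - i) : ℝ) * q ^ (r - i) * (1 - q) ^ (M - (r - i)) := by
  rw [show (3 * (N * p + M * q) / 4 : ℝ) = 3 * N * p / 4 + 3 * M * q / 4 by ring,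
    add_pow_div_factorial, sum_mul, sum_mul]
  refine sum_le_sum fun i hi => ?_
  have hir : i ≤ r := Nat.le_of_lt_succ (mem_range.1 hi)
  have hP := pow_div_factorial_mul_le_binomial_term hp0 hp1 (N := N) (i := i) (by omega)
  have hQ := pow_div_factorial_mul_le_binomial_term hq0 hq1 (N := M) (i := r - i) (by omega)
  calc _ = (3 * N * p / 4) ^ i / i ! * (1 - p) ^ N *
          ((3 * M * q / 4) ^ (r - i) / (r - i)! * (1 - q) ^ M) := by ring
    _ ≤ N.choose i * p ^ i * (1 - p) ^ (N - i) *
          (M.choose (r - i) * q ^ (r - i) * (1 - q) ^ (M - (r - i))) := by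
        gcongr
    _ = _ := by ring

end

theorem binom_sum_pmf_lower_general (kp kq x t r : ℕ) (p q : ℝ)
    (hkp : 1 ≤ kp) (hkq : 1 ≤ kq)
    (hxt : 4 * r ≤ x * t)
    (hq0 : 0 < q) (hqp : q ≤ p) (hp : p ≤ 1/2)
    (φ : ℝ) (hφ : φ = kp * p + kq * q) :
    (∑ i ∈ Finset.range (r + 1),
        ((kp * x * t).choose i : ℝ) * p ^ i * (1 - p) ^ (kp * x * t - i) *
        ((kq * x * t).choose (r - i) : ℝ) * q ^ (r - i) * (1 - q) ^ (kq * x * t - (r - i)))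
      ≥ (φ * x * t) ^ r / ((4/3 : ℝ) ^ r * (r.factorial : ℝ)) *
          (1 - p) ^ (x * t * kp) * (1 - q) ^ (x * t * kq) := by
  have hN : 4 * r ≤ kp * x * t := by nlinarith
  have hM : 4 * r ≤ kq * x * t := by nlinarith
  have hscale : (φ * x * t) ^ r / ((4/3 : ℝ) ^ r * (r.factorial : ℝ)) =
      (3 * ((kp * x * t : ℕ) * p + (kq * x * t : ℕ) * q) / 4) ^ r / r.factorial := by
    rw [hφ, mul_comm ((4/3 : ℝ) ^ r), ← div_div, div_right_comm, ← div_pow]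
    push_cast
    ring_nf
  rw [ge_iff_le, hscale, mul_comm (x * t) kp, mul_comm (x * t) kq, ← mul_assoc, ← mul_assoc]
  exact pow_div_factorial_mul_le_sum_binomial_terms (by linarith) (by linarith) hq0.le
    (by linarith) hN hM

theorem binom_sum_pmf_lower (kp kq x t r : ℕ) (p q : ℝ)
    (hkp : 1 ≤ kp) (hkq : 1 ≤ kq) (hx : 1 ≤ x) (ht : 1 ≤ t) (hr : 1 ≤ r)
    (hxt : 4 * r ≤ x * t)
    (hq0 : 0 < q) (hqp : q ≤ p) (hp : p ≤ 1/2)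
    (φ : ℝ) (hφ : φ = kp * p + kq * q) :
    (∑ i ∈ Finset.range (r + 1),
        ((kp * x * t).choose i : ℝ) * p ^ i * (1 - p) ^ (kp * x * t - i) *
        ((kq * x * t).choose (r - i) : ℝ) * q ^ (r - i) * (1 - q) ^ (kq * x * t - (r - i)))
      ≥ (φ * x * t) ^ r / ((4/3 : ℝ) ^ r * (r.factorial : ℝ)) *
          (1 - p) ^ (x * t * kp) * (1 - q) ^ (x * t * kq) :=
  binom_sum_pmf_lower_general kp kq x t r p q hkp hkq hxt hq0 hqp hp φ hφ
end

section
/- Let π_r(t) = Pr[Bin(k_p t, p) + Bin(k_q t, q) ≥ r] with independent binomials. For any real x ≥ 1 with xt, t positive integers, r ≥ 1, t ≥ 4r, p ≥ q in (0, 1/2], and φ x t ≤ 1/3 where φ = k_p p + k_q q, we have π_r(xt) ≤ 3 (4x/(3(1-p)))^r π_r(t). -/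
/-!
The mass of `Bin(a, p) + Bin(b, q)` at `n` is a convolution of binomial masses. Bounding
`C(a, i) pⁱ` above by `(a p)ⁱ / i!` turns it into the exponential-series convolution
`(a p + b q)ⁿ / n!`, so with mean `y < 1` the upper tail from `r` is at most `yʳ / (r! (1 - y))`.
Conversely, for `4 r ≤ a, b` we have `C(a, i) ≥ (3a/4)ⁱ / i!` for all `i ≤ r`, and Bernoulli's
inequality gives `(1 - p)ᵃ (1 - q)ᵇ ≥ 1 - y`, so the mass at `r` is at least
`(1 - y) (3y/4)ʳ / r!`. With `u = φ t`, comparing `(x u)ʳ / (r! (1 - x u)) ≤ (3/2) (x u)ʳ / r!`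
with `(2/3) (3u/4)ʳ / r! ≤ π_r(t)` gives the claim.
-/

open Finset

noncomputable section

def binomialMass (n : ℕ) (p : ℝ) (k : ℕ) : ℝ :=
  n.choose k * p ^ k * (1 - p) ^ (n - k)

/-- `Pr[Bin(a, p) + Bin(b, q) = n]` for independent binomials. -/
def sumBinomialMass (a b : ℕ) (p q : ℝ) (n : ℕ) : ℝ :=
  ∑ i ∈ range (n + 1), binomialMass a p i * binomialMass b q (n - i)

end

section Bounds

-- Scoped to this section: in the main theorem `φ` must not parse as `Nat.totient`.
open scoped Nat

theorem sum_range_pow_div_factorial_mul (x y : ℝ) (n : ℕ) :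
    ∑ i ∈ range (n + 1), x ^ i / i ! * (y ^ (n - i) / (n - i)!) = (x + y) ^ n / n ! := by
  rw [add_pow, sum_div]
  refine sum_congr rfl fun i hi => ?_
  have hin : i ≤ n := Nat.lt_succ_iff.mp (mem_range.mp hi)
  have hfac : (n.choose i : ℝ) * i ! * (n - i)! = n ! := by
    exact_mod_cast Nat.choose_mul_factorial_mul_factorial hin
  field_simp
  linear_combination (-(x ^ i * y ^ (n - i))) * hfac

theorem sum_Icc_pow_div_factorial_le {y : ℝ} (hy0 : 0 ≤ y) (hy1 : y < 1) (r N : ℕ) :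
    ∑ k ∈ Icc r N, y ^ k / k ! ≤ y ^ r / r ! / (1 - y) := by
  calc ∑ k ∈ Icc r N, y ^ k / k !
      ≤ ∑ k ∈ Ico r (N + 1), y ^ k / r ! := by
        rw [← Ico_add_one_right_eq_Icc]
        refine sum_le_sum fun k hk => ?_
        gcongr
        exact (mem_Ico.mp hk).1
    _ ≤ y ^ r / (1 - y) / r ! := by
        rw [← sum_div]
        gcongr
        exact geom_sum_Ico_le_of_lt_one hy0 hy1
    _ = y ^ r / r ! / (1 - y) := div_right_comm _ _ _

theorem one_sub_add_le_one_sub_pow_mul_one_sub_pow {p q : ℝ} (hp0 : 0 ≤ p) (hp1 : p ≤ 1)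
    (hq0 : 0 ≤ q) (hq1 : q ≤ 1) (a b : ℕ) :
    1 - (a * p + b * q) ≤ (1 - p) ^ a * (1 - q) ^ b := by
  have hpa : 1 - a * p ≤ (1 - p) ^ a := by
    simpa [sub_eq_add_neg] using one_add_mul_le_pow (a := -p) (by linarith) a
  have hqb : 1 - b * q ≤ (1 - q) ^ b := by
    simpa [sub_eq_add_neg] using one_add_mul_le_pow (a := -q) (by linarith) b
  have hpa0 : 0 ≤ (1 - p) ^ a := pow_nonneg (by linarith) a
  have hpa1 : (1 - p) ^ a ≤ 1 := pow_le_one₀ (by linarith) (by linarith)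
  have hbq : 0 ≤ (b : ℝ) * q := by positivity
  nlinarith [mul_nonneg hpa0 (sub_nonneg.2 hqb), mul_nonneg hbq (sub_nonneg.2 hpa1)]

section BinomialMass

variable {p q : ℝ}

theorem binomialMass_nonneg (hp0 : 0 ≤ p) (hp1 : p ≤ 1) (n k : ℕ) : 0 ≤ binomialMass n p k := by
  have : 0 ≤ 1 - p := by linarith
  unfold binomialMass
  positivity

theorem binomialMass_le_pow_div_factorial (hp0 : 0 ≤ p) (hp1 : p ≤ 1) (n k : ℕ) :
    binomialMass n p k ≤ (n * p) ^ k / k ! := by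
  calc binomialMass n p k ≤ n.choose k * p ^ k :=
        mul_le_of_le_one_right (by positivity) (pow_le_one₀ (by linarith) (by linarith))
    _ ≤ n ^ k / k ! * p ^ k := by
        gcongr
        exact Nat.choose_le_pow_div k n
    _ = (n * p) ^ k / k ! := by ring

theorem le_binomialMass (hp0 : 0 ≤ p) (hp1 : p ≤ 1) {n k : ℕ} (hk : 4 * k ≤ n) :
    (1 - p) ^ n * ((3 / 4 * (n * p)) ^ k / k !) ≤ binomialMass n p k := by
  have hchoose : (3 / 4 * n : ℝ) ^ k / k ! ≤ n.choose k := by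
    refine le_trans ?_ (Nat.pow_le_choose k n)
    gcongr
    have hk' : (4 * k : ℝ) ≤ n := by exact_mod_cast hk
    rw [Nat.cast_sub (by omega)]
    push_cast
    linarith
  calc (1 - p) ^ n * ((3 / 4 * (n * p)) ^ k / k !)
      = (3 / 4 * n : ℝ) ^ k / k ! * p ^ k * (1 - p) ^ n := by ring
    _ ≤ n.choose k * p ^ k * (1 - p) ^ (n - k) := by
        gcongr ?_ * _ * ?_
        exact pow_le_pow_of_le_one (by linarith) (by linarith) (Nat.sub_le n k)

variable (hp0 : 0 ≤ p) (hp1 : p ≤ 1) (hq0 : 0 ≤ q) (hq1 : q ≤ 1)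
include hp0 hp1 hq0 hq1

theorem sumBinomialMass_nonneg (a b n : ℕ) : 0 ≤ sumBinomialMass a b p q n :=
  sum_nonneg fun _ _ =>
    mul_nonneg (binomialMass_nonneg hp0 hp1 _ _) (binomialMass_nonneg hq0 hq1 _ _)

theorem sumBinomialMass_le (a b n : ℕ) :
    sumBinomialMass a b p q n ≤ (a * p + b * q) ^ n / n ! := by
  rw [← sum_range_pow_div_factorial_mul]
  exact sum_le_sum fun i _ =>
    mul_le_mul (binomialMass_le_pow_div_factorial hp0 hp1 _ _)
      (binomialMass_le_pow_div_factorial hq0 hq1 _ _)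
      (binomialMass_nonneg hq0 hq1 _ _) (by positivity)

theorem sum_Icc_sumBinomialMass_le {a b : ℕ} (hmean : a * p + b * q < 1) (r N : ℕ) :
    ∑ k ∈ Icc r N, sumBinomialMass a b p q k
      ≤ (a * p + b * q) ^ r / r ! / (1 - (a * p + b * q)) :=
  (sum_le_sum fun k _ => sumBinomialMass_le hp0 hp1 hq0 hq1 a b k).trans
    (sum_Icc_pow_div_factorial_le (by positivity) hmean r N)

theorem le_sumBinomialMass {a b n : ℕ} (ha : 4 * n ≤ a) (hb : 4 * n ≤ b) :
    (1 - (a * p + b * q)) * ((3 / 4 * (a * p + b * q)) ^ n / n !)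
      ≤ sumBinomialMass a b p q n := by
  have hconv := sum_range_pow_div_factorial_mul (3 / 4 * (a * p)) (3 / 4 * (b * q)) n
  rw [← mul_add] at hconv
  calc (1 - (a * p + b * q)) * ((3 / 4 * (a * p + b * q)) ^ n / n !)
      ≤ (1 - p) ^ a * (1 - q) ^ b * ((3 / 4 * (a * p + b * q)) ^ n / n !) := by
        gcongr
        exact one_sub_add_le_one_sub_pow_mul_one_sub_pow hp0 hp1 hq0 hq1 a b
    _ = ∑ i ∈ range (n + 1), (1 - p) ^ a * ((3 / 4 * (a * p)) ^ i / i !) *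
          ((1 - q) ^ b * ((3 / 4 * (b * q)) ^ (n - i) / (n - i)!)) := by
        rw [← hconv, mul_sum]
        exact sum_congr rfl fun _ _ => by ring
    _ ≤ sumBinomialMass a b p q n := by
        refine sum_le_sum fun i hi => ?_
        have hin : i ≤ n := Nat.lt_succ_iff.mp (mem_range.mp hi)
        exact mul_le_mul (le_binomialMass hp0 hp1 (by omega)) (le_binomialMass hq0 hq1 (by omega))
          (by positivity) (binomialMass_nonneg hp0 hp1 _ _)

end BinomialMass

theorem pow_div_one_sub_le_mul_pow {x u p : ℝ} (hu : 0 ≤ u) (hx : 1 ≤ x) (hxu : x * u ≤ 1 / 3)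
    (hp0 : 0 ≤ p) (hp1 : p < 1) (r : ℕ) :
    (x * u) ^ r / (1 - x * u) ≤ 3 * (4 * x / (3 * (1 - p))) ^ r * ((1 - u) * (3 / 4 * u) ^ r) := by
  have hu3 : u ≤ 1 / 3 := by nlinarith
  have hxu0 : 0 ≤ (x * u) ^ r := by positivity
  have hscale : (x * u) ^ r ≤ (4 * x / (3 * (1 - p)) * (3 / 4 * u)) ^ r := by
    refine pow_le_pow_left₀ (by positivity) ?_ r
    rw [show 4 * x / (3 * (1 - p)) * (3 / 4 * u) = x * u / (1 - p) by field_simp]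
    exact le_div_self (by positivity) (by linarith) (by linarith)
  calc (x * u) ^ r / (1 - x * u) ≤ (x * u) ^ r / (2 / 3) := by gcongr; linarith
    _ ≤ 3 * (1 - u) * (x * u) ^ r := by
        rw [div_le_iff₀ (by norm_num)]
        nlinarith
    _ ≤ 3 * (1 - u) * (4 * x / (3 * (1 - p)) * (3 / 4 * u)) ^ r := by
        gcongr
        linarith
    _ = _ := by rw [mul_pow]; ring

end Bounds

theorem pi_r_scale_up_general (kp kq t xt r : ℕ) (x p q : ℝ)
    (hkp : 1 ≤ kp) (hkq : 1 ≤ kq)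
    (hx : 1 ≤ x) (hxt : (xt : ℝ) = x * t)
    (htr : 4 * r ≤ t)
    (hq0 : 0 < q) (hqp : q ≤ p) (hp : p ≤ 1/2)
    (φ : ℝ) (hφ : φ = kp * p + kq * q)
    (hsmall : φ * x * t ≤ 1/3)
    (π : ℕ → ℝ)
    (hπ : ∀ s : ℕ, π s = ∑ r' ∈ Finset.Icc r ((kp + kq) * s),
      ∑ i ∈ Finset.range (r' + 1),
        ((kp * s).choose i : ℝ) * p ^ i * (1 - p) ^ (kp * s - i) *
        ((kq * s).choose (r' - i) : ℝ) * q ^ (r' - i) * (1 - q) ^ (kq * s - (r' - i))) :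
    π xt ≤ 3 * (4 * x / (3 * (1 - p))) ^ r * π t := by
  have hq : 0 ≤ q := hq0.le
  have hp0 : 0 ≤ p := hq.trans hqp
  have hp1 : p ≤ 1 := by linarith
  have hq1 : q ≤ 1 := by linarith
  have hπ' (s : ℕ) : π s = ∑ k ∈ Icc r ((kp + kq) * s), sumBinomialMass (kp * s) (kq * s) p q k := by
    simp only [hπ, sumBinomialMass, binomialMass, ← mul_assoc]
  have hmean (s : ℕ) : ((kp * s : ℕ) : ℝ) * p + ((kq * s : ℕ) : ℝ) * q = φ * s := by
    push_cast
    rw [hφ]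
    ring
  have hu : 0 ≤ φ * t := by rw [hφ]; positivity
  have hxu : φ * xt = x * (φ * t) := by rw [hxt]; ring
  have hupper : π xt ≤ (x * (φ * t)) ^ r / r.factorial / (1 - x * (φ * t)) := by
    rw [hπ', ← hxu, ← hmean]
    exact sum_Icc_sumBinomialMass_le hp0 hp1 hq hq1 (by rw [hmean]; linarith) r _
  have hlower : (1 - φ * t) * ((3 / 4 * (φ * t)) ^ r / r.factorial) ≤ π t := by
    have hrt : r ≤ (kp + kq) * t := le_trans (by omega) (Nat.le_mul_of_pos_left t (by omega))
    rw [hπ', ← hmean]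
    refine (le_sumBinomialMass hp0 hp1 hq hq1 ?_ ?_).trans (single_le_sum
      (fun k _ => sumBinomialMass_nonneg hp0 hp1 hq hq1 _ _ k) (mem_Icc.mpr ⟨le_rfl, hrt⟩))
    · exact htr.trans (Nat.le_mul_of_pos_left t hkp)
    · exact htr.trans (Nat.le_mul_of_pos_left t hkq)
  calc π xt ≤ (x * (φ * t)) ^ r / (1 - x * (φ * t)) / r.factorial := by rwa [div_right_comm]
    _ ≤ 3 * (4 * x / (3 * (1 - p))) ^ r * ((1 - φ * t) * (3 / 4 * (φ * t)) ^ r) / r.factorial := by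
        gcongr
        exact pow_div_one_sub_le_mul_pow hu hx (by linarith) hp0 (by linarith) r
    _ = 3 * (4 * x / (3 * (1 - p))) ^ r * ((1 - φ * t) * ((3 / 4 * (φ * t)) ^ r / r.factorial)) := by ring
    _ ≤ 3 * (4 * x / (3 * (1 - p))) ^ r * π t := by gcongr

theorem pi_r_scale_up (kp kq t xt r : ℕ) (x p q : ℝ)
    (hkp : 1 ≤ kp) (hkq : 1 ≤ kq) (ht : 1 ≤ t) (hxt0 : 1 ≤ xt)
    (hx : 1 ≤ x) (hxt : (xt : ℝ) = x * t)
    (hr : 1 ≤ r) (htr : 4 * r ≤ t)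
    (hq0 : 0 < q) (hqp : q ≤ p) (hp : p ≤ 1/2)
    (φ : ℝ) (hφ : φ = kp * p + kq * q)
    (hsmall : φ * x * t ≤ 1/3)
    (π : ℕ → ℝ)
    (hπ : ∀ s : ℕ, π s = ∑ r' ∈ Finset.Icc r ((kp + kq) * s),
      ∑ i ∈ Finset.range (r' + 1),
        ((kp * s).choose i : ℝ) * p ^ i * (1 - p) ^ (kp * s - i) *
        ((kq * s).choose (r' - i) : ℝ) * q ^ (r' - i) * (1 - q) ^ (kq * s - (r' - i))) :
    π xt ≤ 3 * (4 * x / (3 * (1 - p))) ^ r * π t :=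
  pi_r_scale_up_general kp kq t xt r x p q hkp hkq hx hxt htr hq0 hqp hp φ hφ hsmall π hπ
end
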